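/- arXiv:1801.00420 — 3 statements merged into one kernel-verified Lean document; each statement's English description precedes it below -/
import Mathlib

section
/- The compacton profile Φ_{B,c}(x) = sqrt(c + sqrt(4B + c²) cos(√2 x)), defined for x in (-x_{B,c}, x_{B,c}) where x_{B,c} is the smallest positive solution of cos(√2 x) = -c/sqrt(4B+c²), satisfies the traveling wave ODE -c Φ' + (Φ(ΦΦ')' + Φ³)' = 0 on its interval of definition. -/
open Real Set Filter Topology

/-!
Write `g(x) = c + A cos(√2 x)` with `A = √(4B + c²)`, so that `Φ = √g` and `g'' = -2 (g - c)`.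
Where `g > 0` we have `Φ Φ' = g' / 2`, hence `(Φ Φ')' = g'' / 2 = c - Φ²`, so that
`Φ (Φ Φ')' + Φ³ = c Φ` and the equation reduces to `-c Φ' + c Φ' = 0`.
The radicand `g` is positive on `(-x_{B,c}, x_{B,c})` by the intermediate value theorem,
since `x_{B,c}` is the first positive zero of `g` and `g` is even.
-/

theorem lt_of_forall_ne_of_lt_left {h : ℝ → ℝ} {a l r : ℝ} (hh : ContinuousOn h (Ico l r))
    (hl : a < h l) (hne : ∀ x ∈ Ioo l r, h x ≠ a) : ∀ x ∈ Ico l r, a < h x := by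
  rintro x ⟨hlx, hxr⟩
  rcases hlx.eq_or_lt with rfl | hlx
  · exact hl
  by_contra! hxa
  obtain ⟨s, ⟨hls, hsx⟩, hsa⟩ :=
    intermediate_value_Icc' hlx.le (hh.mono (Icc_subset_Ico_right hxr)) ⟨hxa, hl.le⟩
  have hs : s ≠ l := by rintro rfl; exact hl.ne' hsa
  exact hne s ⟨lt_of_le_of_ne hls hs.symm, hsx.trans_lt hxr⟩ hsa

theorem traveling_wave_eq_zero_of_hasDerivAt_mul_deriv {Φ : ℝ → ℝ} {U : Set ℝ} (hU : IsOpen U)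
    (c : ℝ) (hΦ : ∀ y ∈ U, HasDerivAt (fun z => Φ z * deriv Φ z) (c - Φ y ^ 2) y) :
    ∀ x ∈ U, -c * deriv Φ x +
      deriv (fun z => Φ z * deriv (fun y => Φ y * deriv Φ y) z + Φ z ^ 3) x = 0 := by
  intro x hx
  have hcΦ : (fun z => Φ z * deriv (fun y => Φ y * deriv Φ y) z + Φ z ^ 3) =ᶠ[𝓝 x]
      fun z => c * Φ z := by
    filter_upwards [hU.mem_nhds hx] with z hz
    rw [(hΦ z hz).deriv]
    ring
  rw [hcΦ.deriv_eq, deriv_const_mul_field]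
  ring

theorem sqrt_mul_deriv_sqrt {g : ℝ → ℝ} {y : ℝ} (hg : DifferentiableAt ℝ g y) (hy : 0 < g y) :
    √(g y) * deriv (fun z => √(g z)) y = deriv g y / 2 := by
  rw [deriv_sqrt hg hy.ne']
  field_simp [(sqrt_pos.mpr hy).ne']

theorem hasDerivAt_sqrt_mul_deriv_sqrt {g : ℝ → ℝ} {U : Set ℝ} {y g₂ : ℝ} (hU : IsOpen U)
    (hg : ∀ z ∈ U, DifferentiableAt ℝ g z) (hpos : ∀ z ∈ U, 0 < g z)
    (hg₂ : HasDerivAt (deriv g) g₂ y) (hy : y ∈ U) :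
    HasDerivAt (fun z => √(g z) * deriv (fun w => √(g w)) z) (g₂ / 2) y := by
  refine hg₂.div_const 2 |>.congr_of_eventuallyEq ?_
  filter_upwards [hU.mem_nhds hy] with z hz
  exact sqrt_mul_deriv_sqrt (hg z hz) (hpos z hz)

theorem hasDerivAt_mul_cos (A ω y : ℝ) :
    HasDerivAt (fun z => A * cos (ω * z)) (-(A * ω * sin (ω * y))) y :=
  (((hasDerivAt_id' y).const_mul ω).cos.const_mul A).congr_deriv (by ring)

theorem deriv_const_add_mul_cos (c A ω : ℝ) :
    deriv (fun z => c + A * cos (ω * z)) = fun z => -(A * ω * sin (ω * z)) :=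
  funext fun z => ((hasDerivAt_mul_cos A ω z).const_add c).deriv

theorem hasDerivAt_deriv_const_add_mul_cos (c A ω y : ℝ) :
    HasDerivAt (deriv fun z => c + A * cos (ω * z)) (-(ω ^ 2 * (A * cos (ω * y)))) y := by
  rw [deriv_const_add_mul_cos]
  exact (((hasDerivAt_id' y).const_mul ω).sin.const_mul (A * ω)).neg.congr_deriv (by ring)

section Compacton

variable {B c : ℝ}

theorem four_mul_add_sq_pos (hBc : 0 < B ∨ (B = 0 ∧ 0 < c)) : 0 < 4 * B + c ^ 2 := by
  rcases hBc with hB | ⟨rfl, hc⟩ <;> positivity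

theorem neg_lt_sqrt_four_mul_add_sq (hBc : 0 < B ∨ (B = 0 ∧ 0 < c)) :
    -c < √(4 * B + c ^ 2) := by
  rcases hBc with hB | ⟨-, hc⟩
  · calc -c ≤ |c| := neg_le_abs c
      _ = √(c ^ 2) := (sqrt_sq_eq_abs c).symm
      _ < √(4 * B + c ^ 2) := sqrt_lt_sqrt (sq_nonneg c) (by linarith)
  · linarith [sqrt_nonneg (4 * B + c ^ 2)]

theorem compacton_radicand_pos (hBc : 0 < B ∨ (B = 0 ∧ 0 < c)) {xBc : ℝ}
    (hxBc_min : ∀ x, 0 < x → x < xBc → cos (√2 * x) ≠ -c / √(4 * B + c ^ 2)) :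
    ∀ y ∈ Ioo (-xBc) xBc, 0 < c + √(4 * B + c ^ 2) * cos (√2 * y) := by
  intro y ⟨hy₁, hy₂⟩
  have hA := sqrt_pos.mpr (four_mul_add_sq_pos hBc)
  have hcos : -c / √(4 * B + c ^ 2) < cos (√2 * |y|) := by
    refine lt_of_forall_ne_of_lt_left (by fun_prop) ?_ (fun x hx => hxBc_min x hx.1 hx.2) |y|
      ⟨abs_nonneg y, abs_lt.mpr ⟨hy₁, hy₂⟩⟩
    rw [mul_zero, cos_zero, div_lt_one hA]
    exact neg_lt_sqrt_four_mul_add_sq hBc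
  rw [div_lt_iff₀ hA, ← abs_of_pos (sqrt_pos.mpr two_pos), ← abs_mul, cos_abs] at hcos
  linarith

end Compacton

theorem compacton_satisfies_traveling_wave_ODE_general
    (B c : ℝ) (hBc : (0 < B) ∨ (B = 0 ∧ 0 < c))
    (Φ : ℝ → ℝ)
    (hΦ : ∀ x, Φ x = Real.sqrt (c + Real.sqrt (4 * B + c ^ 2) * Real.cos (Real.sqrt 2 * x)))
    (xBc : ℝ)
    (hxBc_min : ∀ x, 0 < x → x < xBc →
      Real.cos (Real.sqrt 2 * x) ≠ -c / Real.sqrt (4 * B + c ^ 2)) :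
    ∀ x ∈ Ioo (-xBc) xBc,
      -c * deriv Φ x +
        deriv (fun z => Φ z * deriv (fun y => Φ y * deriv Φ y) z + (Φ z) ^ 3) x = 0 := by
  set g : ℝ → ℝ := fun z => c + √(4 * B + c ^ 2) * cos (√2 * z)
  have hpos : ∀ y ∈ Ioo (-xBc) xBc, 0 < g y := compacton_radicand_pos hBc hxBc_min
  obtain rfl : Φ = fun z => √(g z) := funext hΦ
  refine traveling_wave_eq_zero_of_hasDerivAt_mul_deriv isOpen_Ioo c fun y hy => ?_
  convert hasDerivAt_sqrt_mul_deriv_sqrt isOpen_Ioo (fun z _ => by fun_prop) hpos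
    (hasDerivAt_deriv_const_add_mul_cos _ _ _ y) hy using 1
  rw [sq_sqrt (hpos y hy).le, sq_sqrt zero_le_two]
  ring

/-- The compacton profile `Φ_{B,c}` satisfies the traveling wave ODE
`-c Φ' + (Φ(ΦΦ')' + Φ³)' = 0` on its interval of definition `(-x_{B,c}, x_{B,c})`. -/
theorem compacton_satisfies_traveling_wave_ODE
    (B c : ℝ) (hBc : (0 < B) ∨ (B = 0 ∧ 0 < c))
    (Φ : ℝ → ℝ)
    (hΦ : ∀ x, Φ x = Real.sqrt (c + Real.sqrt (4 * B + c ^ 2) * Real.cos (Real.sqrt 2 * x)))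
    (xBc : ℝ) (hxBc_pos : 0 < xBc)
    (hxBc_root : Real.cos (Real.sqrt 2 * xBc) = -c / Real.sqrt (4 * B + c ^ 2))
    (hxBc_min : ∀ x, 0 < x → x < xBc →
      Real.cos (Real.sqrt 2 * x) ≠ -c / Real.sqrt (4 * B + c ^ 2)) :
    ∀ x ∈ Ioo (-xBc) xBc,
      -c * deriv Φ x +
        deriv (fun z => Φ z * deriv (fun y => Φ y * deriv Φ y) z + (Φ z) ^ 3) x = 0 :=
  compacton_satisfies_traveling_wave_ODE_general B c hBc Φ hΦ xBc hxBc_min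
end

section
/- Focusing non-existence of confined global solutions: if u_0 ≠ 0 and H(u_0) ≥ 0, there is no globally defined solution u of u_t + (u(u u_x)_x + u³)_x = 0 (with u ∈ C¹([0,∞)×ℝ), u² ∈ C([0,∞); C³(ℝ))) whose support remains contained in a fixed bounded interval [−M, M] for all times. -/
open Real Set MeasureTheory

/-- The drift `b = (1/2)(u²)_{xx} + μ u²` of the hydrodynamic formulation. -/
noncomputable def hydroDrift (μ : ℝ) (u : ℝ → ℝ → ℝ) (t x : ℝ) : ℝ :=
  (1 / 2) * iteratedDeriv 2 (fun z => (u t z) ^ 2) x + μ * (u t x) ^ 2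

/-- `u` is a hydrodynamic solution on `[0,∞)`: `u ∈ C¹`, `u² ∈ C⁰_t C³_x`, and
`u_t + (b u)_x = 0` with `b = (1/2)(u²)_{xx} + μ u²`. -/
structure IsHydroSolution (μ : ℝ) (u : ℝ → ℝ → ℝ) : Prop where
  reg_C1 : ContDiffOn ℝ 1 (Function.uncurry u) (Ici (0:ℝ) ×ˢ univ)
  reg_sq_C3 : ∀ t, 0 ≤ t → ContDiff ℝ 3 (fun x => (u t x) ^ 2)
  reg_sq_cont : ∀ n ≤ 3, ContinuousOn
      (fun p : ℝ × ℝ => iteratedDeriv n (fun z => (u p.1 z) ^ 2) p.2) (Ici (0:ℝ) ×ˢ univ)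
  eq : ∀ t, 0 ≤ t → ∀ x : ℝ,
      deriv (fun s => u s x) t + deriv (fun z => hydroDrift μ u t z * u t z) x = 0

/-!
Write `v = u²` and `b = v_xx / 2 + v`, so that the equation becomes `v_t = -(2 b_x v + b v_x)`.
For a density supported in a fixed interval `(-R, R)` this law conserves the mass `∫ v` and the
energy `∫ v_x² / 8 - v² / 4`, which is `H(u)`, while the virial obeys
`d/dt ∫ x v = -10 H - ∫ v²`. If `H ≥ 0`, Cauchy–Schwarz bounds `∫ v²` from below by
`(∫ v)² / 2R > 0`, so the virial decreases at least linearly in time; but it stays above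
`-R ∫ v`, which is absurd for large times.

Only `u ∈ C¹` is assumed, so `v_x` need not be differentiable in time: the time derivatives of
the functionals are computed from a representation `Φ s - Φ t = ∫ (v s - v t) A s`.
-/

open Function Filter Topology

namespace FocusingHydro

noncomputable def drift (f : ℝ → ℝ) (x : ℝ) : ℝ :=
  (1 / 2) * iteratedDeriv 2 f x + f x

noncomputable def rate (f : ℝ → ℝ) (x : ℝ) : ℝ :=
  -(2 * deriv (drift f) x * f x + drift f x * deriv f x)

noncomputable def flux (f : ℝ → ℝ) (x : ℝ) : ℝ :=
  f x * iteratedDeriv 2 f x - (1 / 4) * deriv f x ^ 2 + (3 / 2) * f x ^ 2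

noncomputable def mass (a b : ℝ) (f : ℝ → ℝ) : ℝ := ∫ x in a..b, f x

noncomputable def virial (a b : ℝ) (f : ℝ → ℝ) : ℝ := ∫ x in a..b, x * f x

noncomputable def energy (a b : ℝ) (f : ℝ → ℝ) : ℝ :=
  ∫ x in a..b, (1 / 8) * deriv f x ^ 2 - (1 / 4) * f x ^ 2

section FixedTime

variable {f g : ℝ → ℝ} {a b x : ℝ}

theorem hasDerivAt_iteratedDeriv {n k : ℕ} (hf : ContDiff ℝ n f) (hk : k < n) (x : ℝ) :
    HasDerivAt (iteratedDeriv k f) (iteratedDeriv (k + 1) f x) x := by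
  rw [iteratedDeriv_succ]
  exact (hf.differentiable_iteratedDeriv k (mod_cast hk) x).hasDerivAt

theorem hasDerivAt_deriv_of_contDiff_two (hf : ContDiff ℝ 2 f) (x : ℝ) :
    HasDerivAt (deriv f) (iteratedDeriv 2 f x) x := by
  simpa only [iteratedDeriv_one] using hasDerivAt_iteratedDeriv hf one_lt_two x

theorem continuous_drift (hf : ContDiff ℝ 2 f) : Continuous (drift f) :=
  (continuous_const.mul (hf.continuous_iteratedDeriv' 2)).add hf.continuous

theorem hasDerivAt_drift (hf : ContDiff ℝ 3 f) (x : ℝ) :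
    HasDerivAt (drift f) ((1 / 2) * iteratedDeriv 3 f x + deriv f x) x :=
  ((hasDerivAt_iteratedDeriv hf (by norm_num) x).const_mul _).add
    (hf.differentiable (by norm_num) x).hasDerivAt

theorem rate_eq (hf : ContDiff ℝ 3 f) (x : ℝ) :
    rate f x = -(2 * ((1 / 2) * iteratedDeriv 3 f x + deriv f x) * f x
      + drift f x * deriv f x) := by
  rw [rate, (hasDerivAt_drift hf x).deriv]

theorem continuous_rate (hf : ContDiff ℝ 3 f) : Continuous (rate f) := by
  have h3 := hf.continuous_iteratedDeriv' 3
  have h1 := hf.continuous_deriv (by norm_num)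
  have hb := continuous_drift (hf.of_le (by norm_num))
  simp only [funext (rate_eq hf)]
  exact (((continuous_const.mul (continuous_const.mul h3 |>.add h1)).mul hf.continuous).add
    (hb.mul h1)).neg

theorem hasDerivAt_flux (hf : ContDiff ℝ 3 f) (x : ℝ) : HasDerivAt (flux f) (-rate f x) x := by
  have h0 := (hf.differentiable (by norm_num) x).hasDerivAt
  have h1 := hasDerivAt_deriv_of_contDiff_two (hf.of_le (by norm_num)) x
  have h2 := hasDerivAt_iteratedDeriv hf (k := 2) (by norm_num) x
  refine ((h0.mul h2).sub ((h1.pow 2).const_mul _) |>.add ((h0.pow 2).const_mul _)).congr_deriv ?_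
  rw [rate_eq hf, drift]
  push_cast
  ring

theorem eq_zero_and_deriv_eq_zero_of_notMem_tsupport (hx : x ∉ tsupport f) :
    f x = 0 ∧ deriv f x = 0 :=
  ⟨image_eq_zero_of_notMem_tsupport hx,
    image_eq_zero_of_notMem_tsupport fun h => hx (tsupport_deriv_subset h)⟩

theorem flux_eq_zero (hx : x ∉ tsupport f) : flux f x = 0 := by
  simp [flux, eq_zero_and_deriv_eq_zero_of_notMem_tsupport hx]

theorem integral_rate (hf : ContDiff ℝ 3 f) (ha : a ∉ tsupport f) (hb : b ∉ tsupport f) :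
    ∫ x in a..b, rate f x = 0 := by
  have hint := intervalIntegral.integral_eq_sub_of_hasDerivAt (fun x _ => hasDerivAt_flux hf x)
    ((continuous_rate hf).neg.intervalIntegrable a b)
  rw [intervalIntegral.integral_neg, flux_eq_zero ha, flux_eq_zero hb] at hint
  linarith

theorem integral_mul_rate (hf : ContDiff ℝ 3 f) (ha : a ∉ tsupport f) (hb : b ∉ tsupport f) :
    ∫ x in a..b, x * rate f x = -(10 * energy a b f + ∫ x in a..b, f x ^ 2) := by
  have hG : ∀ x, HasDerivAt (fun x => f x * deriv f x - x * flux f x)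
      (x * rate f x + (10 * ((1 / 8) * deriv f x ^ 2 - (1 / 4) * f x ^ 2) + f x ^ 2)) x := by
    intro x
    have h0 := (hf.differentiable (by norm_num) x).hasDerivAt
    have h1 := hasDerivAt_deriv_of_contDiff_two (hf.of_le (by norm_num)) x
    refine ((h0.mul h1).sub ((hasDerivAt_id x).mul (hasDerivAt_flux hf x))).congr_deriv ?_
    simp only [flux, id]
    ring
  have hr := continuous_rate hf
  have hd := hf.continuous_deriv (by norm_num)
  have hc := hf.continuous
  have hint := intervalIntegral.integral_eq_sub_of_hasDerivAt (fun x _ => hG x)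
    (Continuous.intervalIntegrable (by fun_prop) a b)
  obtain ⟨hfa, hf'a⟩ := eq_zero_and_deriv_eq_zero_of_notMem_tsupport ha
  obtain ⟨hfb, hf'b⟩ := eq_zero_and_deriv_eq_zero_of_notMem_tsupport hb
  rw [hfa, hf'a, hfb, hf'b, flux_eq_zero ha, flux_eq_zero hb, intervalIntegral.integral_add,
    intervalIntegral.integral_add, intervalIntegral.integral_const_mul] at hint
  · rw [energy]
    linarith
  all_goals exact Continuous.intervalIntegrable (by fun_prop) a b

theorem integral_rate_mul_drift (hf : ContDiff ℝ 3 f) (ha : a ∉ tsupport f)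
    (hb : b ∉ tsupport f) : ∫ x in a..b, rate f x * drift f x = 0 := by
  have hG : ∀ x, HasDerivAt (fun x => -(drift f x ^ 2 * f x)) (rate f x * drift f x) x := by
    intro x
    refine (((hasDerivAt_drift hf x).pow 2).mul
      (hf.differentiable (by norm_num) x).hasDerivAt).neg.congr_deriv ?_
    rw [rate_eq hf, Pi.pow_apply]
    push_cast
    ring
  have hr := continuous_rate hf
  have hd := continuous_drift (hf.of_le (by norm_num))
  rw [intervalIntegral.integral_eq_sub_of_hasDerivAt (fun x _ => hG x)
      (Continuous.intervalIntegrable (by fun_prop) a b),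
    (eq_zero_and_deriv_eq_zero_of_notMem_tsupport ha).1,
    (eq_zero_and_deriv_eq_zero_of_notMem_tsupport hb).1]
  simp

theorem energy_sub_energy (hf : ContDiff ℝ 2 f) (hg : ContDiff ℝ 2 g) (hfa : a ∉ tsupport f)
    (hfb : b ∉ tsupport f) (hga : a ∉ tsupport g) (hgb : b ∉ tsupport g) :
    energy a b f - energy a b g
      = ∫ x in a..b, (f x - g x) * (-(1 / 4) * (drift f x + drift g x)) := by
  have hG : ∀ x, HasDerivAt (fun x => (1 / 8) * ((f x - g x) * (deriv f x + deriv g x)))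
      (((1 / 8) * deriv f x ^ 2 - (1 / 4) * f x ^ 2) - ((1 / 8) * deriv g x ^ 2 - (1 / 4) * g x ^ 2)
        - (f x - g x) * (-(1 / 4) * (drift f x + drift g x))) x := by
    intro x
    have hf0 := (hf.differentiable (by norm_num) x).hasDerivAt
    have hg0 := (hg.differentiable (by norm_num) x).hasDerivAt
    refine (((hf0.sub hg0).mul ((hasDerivAt_deriv_of_contDiff_two hf x).add
      (hasDerivAt_deriv_of_contDiff_two hg x))).const_mul _).congr_deriv ?_
    simp only [drift, Pi.add_apply, Pi.sub_apply]
    ring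
  have hfc := hf.continuous
  have hgc := hg.continuous
  have hfd := hf.continuous_deriv (by norm_num)
  have hgd := hg.continuous_deriv (by norm_num)
  have hfb' := continuous_drift hf
  have hgb' := continuous_drift hg
  have hint := intervalIntegral.integral_eq_sub_of_hasDerivAt (fun x _ => hG x)
    (Continuous.intervalIntegrable (by fun_prop) a b)
  rw [(eq_zero_and_deriv_eq_zero_of_notMem_tsupport hfa).1,
    (eq_zero_and_deriv_eq_zero_of_notMem_tsupport hfb).1,
    (eq_zero_and_deriv_eq_zero_of_notMem_tsupport hga).1,
    (eq_zero_and_deriv_eq_zero_of_notMem_tsupport hgb).1,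
    intervalIntegral.integral_sub, intervalIntegral.integral_sub] at hint
  · rw [energy, energy]
    linarith
  all_goals exact Continuous.intervalIntegrable (by fun_prop) a b

theorem sq_integral_le_mul_integral_sq (hf : Continuous f) (hab : a ≤ b) :
    (∫ x in a..b, f x) ^ 2 ≤ (b - a) * ∫ x in a..b, f x ^ 2 := by
  set m := ∫ x in a..b, f x
  have hsq : 0 ≤ ∫ x in a..b, ((b - a) * f x - m) ^ 2 :=
    intervalIntegral.integral_nonneg hab fun x _ => sq_nonneg _
  have hexpand : ∫ x in a..b, ((b - a) * f x - m) ^ 2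
      = (b - a) * ((b - a) * (∫ x in a..b, f x ^ 2) - m ^ 2) := by
    have hpt : ∀ x ∈ uIcc a b, ((b - a) * f x - m) ^ 2
        = ((b - a) ^ 2 * f x ^ 2 - (2 * (b - a) * m) * f x) + m ^ 2 := fun x _ => by ring
    rw [intervalIntegral.integral_congr hpt, intervalIntegral.integral_add,
      intervalIntegral.integral_sub, intervalIntegral.integral_const_mul,
      intervalIntegral.integral_const_mul, intervalIntegral.integral_const, smul_eq_mul]
    · ring
    all_goals exact Continuous.intervalIntegrable (by fun_prop) a b
  rcases hab.eq_or_lt with rfl | hlt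
  · simp [m]
  · exact sub_nonneg.1 ((mul_nonneg_iff_of_pos_left (sub_pos.2 hlt)).1 (hexpand ▸ hsq))

theorem mul_mass_le_virial (hf : Continuous f) (hf0 : 0 ≤ f) (hab : a ≤ b) :
    a * mass a b f ≤ virial a b f := by
  rw [mass, ← intervalIntegral.integral_const_mul]
  exact intervalIntegral.integral_mono_on hab ((continuous_const.mul hf).intervalIntegrable a b)
    ((continuous_id.mul hf).intervalIntegrable a b)
    fun x hx => mul_le_mul_of_nonneg_right hx.1 (hf0 x)

theorem mass_pos (hf : Continuous f) (hf0 : 0 ≤ f) (hne : f ≠ 0) (hsupp : tsupport f ⊆ Ioo a b) :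
    0 < mass a b f := by
  obtain ⟨x, hx⟩ : ∃ x, f x ≠ 0 := by
    by_contra! h
    exact hne (funext h)
  rw [mass, intervalIntegral.integral_eq_integral_of_support_subset
    ((subset_tsupport f).trans (hsupp.trans Ioo_subset_Ioc_self))]
  exact hf.integral_pos_of_hasCompactSupport_nonneg_nonzero
    (isCompact_Icc.of_isClosed_subset (isClosed_tsupport f) (hsupp.trans Ioo_subset_Icc_self))
    hf0 hx

end FixedTime

section Parametric

variable {v V A : ℝ → ℝ → ℝ} {Φ : ℝ → ℝ} {T : Set ℝ} {a b t₀ : ℝ}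

theorem hasDerivAt_of_sub_eq_integral_mul (hT : IsOpen T) (ht₀ : t₀ ∈ T)
    (hv : ∀ s ∈ T, Continuous (v s)) (hvV : ∀ s ∈ T, ∀ x, HasDerivAt (fun τ => v τ x) (V s x) s)
    (hV : ContinuousOn (uncurry V) (T ×ˢ univ)) (hA : ContinuousOn (uncurry A) (T ×ˢ univ))
    (hΦ : ∀ s ∈ T, Φ s - Φ t₀ = ∫ x in a..b, (v s x - v t₀ x) * A s x) :
    HasDerivAt Φ (∫ x in a..b, V t₀ x * A t₀ x) t₀ := by
  obtain ⟨δ, hδ, hball⟩ := Metric.nhds_basis_closedBall.mem_iff.1 (hT.mem_nhds ht₀)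
  have hK : Metric.closedBall t₀ δ ×ˢ uIcc a b ⊆ T ×ˢ univ := prod_mono hball (subset_univ _)
  have hKc := (isCompact_closedBall t₀ δ).prod (isCompact_uIcc (a := a) (b := b))
  obtain ⟨CV, hCV⟩ := hKc.exists_bound_of_continuousOn (hV.mono hK)
  obtain ⟨CA, hCA⟩ := hKc.exists_bound_of_continuousOn (hA.mono hK)
  have hnear : ∀ᶠ s in 𝓝[≠] t₀, s ∈ Metric.closedBall t₀ δ ∧ s ≠ t₀ :=
    (eventually_nhdsWithin_of_eventually_nhds (Metric.closedBall_mem_nhds t₀ hδ)).and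
      self_mem_nhdsWithin
  have hAs : ∀ s ∈ T, Continuous (A s) := fun s hs =>
    continuousOn_univ.1 (hA.uncurry_left s hs)
  rw [hasDerivAt_iff_tendsto_slope]
  refine Tendsto.congr' ?_ (intervalIntegral.tendsto_integral_filter_of_dominated_convergence
    (F := fun s x => (s - t₀)⁻¹ * (v s x - v t₀ x) * A s x) (fun _ => CV * CA) ?_ ?_
    intervalIntegrable_const (ae_of_all _ fun x _ => ?_))
  · filter_upwards [hnear] with s hs
    rw [slope_def_field, hΦ s (hball hs.1), div_eq_inv_mul,
      ← intervalIntegral.integral_const_mul]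
    simp only [mul_assoc]
  · filter_upwards [hnear] with s hs
    have hsT := hball hs.1
    exact ((continuous_const.mul ((hv s hsT).sub (hv t₀ ht₀))).mul
      (hAs s hsT)).aestronglyMeasurable
  · filter_upwards [hnear] with s hs
    refine ae_of_all _ fun x hx => ?_
    have hx' : x ∈ uIcc a b := uIoc_subset_uIcc hx
    have hLip : ‖v s x - v t₀ x‖ ≤ CV * ‖s - t₀‖ :=
      (convex_closedBall t₀ δ).norm_image_sub_le_of_norm_hasDerivWithin_le
        (fun τ hτ => (hvV τ (hball hτ) x).hasDerivWithinAt)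
        (fun τ hτ => hCV (τ, x) ⟨hτ, hx'⟩) (Metric.mem_closedBall_self hδ.le) hs.1
    have hpos : 0 < ‖s - t₀‖ := norm_pos_iff.2 (sub_ne_zero.2 hs.2)
    rw [norm_mul, norm_mul, norm_inv]
    gcongr
    · exact (norm_nonneg _).trans (hCV (t₀, x) ⟨Metric.mem_closedBall_self hδ.le, hx'⟩)
    · rw [inv_mul_le_iff₀ hpos, mul_comm]
      exact hLip
    · exact hCA (s, x) ⟨hs.1, hx'⟩
  · have hslope : Tendsto (fun s => (s - t₀)⁻¹ * (v s x - v t₀ x)) (𝓝[≠] t₀) (𝓝 (V t₀ x)) :=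
      (hvV t₀ ht₀ x).tendsto_slope.congr fun s => by rw [slope_def_field, div_eq_inv_mul]
    have hAx : Tendsto (fun s => A s x) (𝓝[≠] t₀) (𝓝 (A t₀ x)) :=
      ((hA.continuousAt (prod_mem_nhds (hT.mem_nhds ht₀) univ_mem)).tendsto.comp
        ((Continuous.prodMk_left x).tendsto t₀)).mono_left nhdsWithin_le_nhds
    exact hslope.mul hAx

theorem continuousOn_integral_of_continuousOn_Ici {w : ℝ → ℝ → ℝ} {t₁ : ℝ}
    (hw : ContinuousOn (uncurry w) (Ici t₁ ×ˢ univ)) :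
    ContinuousOn (fun t => ∫ x in a..b, w t x) (Ici t₁) := by
  have hc : Continuous (uncurry fun t x => w (max t t₁) x) :=
    hw.comp_continuous (f := fun p : ℝ × ℝ => (max p.1 t₁, p.2)) (by fun_prop)
      fun p => ⟨le_max_right p.1 t₁, mem_univ _⟩
  refine (intervalIntegral.continuous_parametric_intervalIntegral_of_continuous' (μ := volume)
    hc a b).continuousOn.congr fun t ht => ?_
  simp only [max_eq_left (mem_Ici.1 ht)]

theorem le_add_mul_of_hasDerivAt_le {f f' : ℝ → ℝ} {C t₁ t : ℝ}
    (hc : ContinuousOn f (Ici t₁)) (hd : ∀ s, t₁ < s → HasDerivAt f (f' s) s)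
    (hle : ∀ s, t₁ < s → f' s ≤ C) (ht : t₁ ≤ t) : f t ≤ f t₁ + C * (t - t₁) := by
  have := (convex_Ici t₁).image_sub_le_mul_sub_of_deriv_le hc
    (fun s hs => (hd s (interior_Ici.subset hs)).differentiableAt.differentiableWithinAt)
    (fun s hs => (hd s (interior_Ici.subset hs)).deriv ▸ hle s (interior_Ici.subset hs))
    t₁ self_mem_Ici t ht ht
  linarith

theorem eq_of_hasDerivAt_eq_zero {f : ℝ → ℝ} {t₁ t : ℝ} (hc : ContinuousOn f (Ici t₁))
    (hd : ∀ s, t₁ < s → HasDerivAt f 0 s) (ht : t₁ ≤ t) : f t = f t₁ := by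
  have hle := le_add_mul_of_hasDerivAt_le hc hd (fun _ _ => le_rfl) ht
  have hge := le_add_mul_of_hasDerivAt_le hc.neg (fun s hs => (hd s hs).neg)
    (fun _ _ => neg_zero.le) ht
  simp only [Pi.neg_apply, zero_mul, add_zero, neg_le_neg_iff] at hle hge
  exact le_antisymm hle hge

end Parametric

structure IsDensityFlow (v : ℝ → ℝ → ℝ) : Prop where
  nonneg : ∀ t, 0 ≤ v t
  contDiff : ∀ t, 0 ≤ t → ContDiff ℝ 3 (v t)
  continuousOn_iteratedDeriv : ∀ n ≤ 3,
    ContinuousOn (fun p : ℝ × ℝ => iteratedDeriv n (v p.1) p.2) (Ici 0 ×ˢ univ)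
  hasDerivAt_rate : ∀ t, 0 < t → ∀ x, HasDerivAt (fun s => v s x) (rate (v t) x) t

namespace IsDensityFlow

variable {v : ℝ → ℝ → ℝ} {a b t : ℝ}

theorem continuousOn (hv : IsDensityFlow v) : ContinuousOn (uncurry v) (Ici 0 ×ˢ univ) := by
  have h := hv.continuousOn_iteratedDeriv 0 (by norm_num)
  simp only [iteratedDeriv_zero] at h
  exact h

theorem continuous (hv : IsDensityFlow v) (ht : 0 ≤ t) : Continuous (v t) :=
  continuousOn_univ.1 (hv.continuousOn.uncurry_left t ht)

theorem continuousOn_deriv (hv : IsDensityFlow v) :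
    ContinuousOn (fun p : ℝ × ℝ => deriv (v p.1) p.2) (Ici 0 ×ˢ univ) := by
  simpa only [iteratedDeriv_one] using hv.continuousOn_iteratedDeriv 1 (by norm_num)

theorem continuousOn_drift (hv : IsDensityFlow v) :
    ContinuousOn (fun p : ℝ × ℝ => drift (v p.1) p.2) (Ici 0 ×ˢ univ) :=
  (continuousOn_const.mul (hv.continuousOn_iteratedDeriv 2 (by norm_num))).add hv.continuousOn

theorem continuousOn_rate (hv : IsDensityFlow v) :
    ContinuousOn (fun p : ℝ × ℝ => rate (v p.1) p.2) (Ici 0 ×ˢ univ) := by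
  have h3 := hv.continuousOn_iteratedDeriv 3 le_rfl
  refine (((continuousOn_const.mul ((continuousOn_const.mul h3).add hv.continuousOn_deriv)).mul
    hv.continuousOn).add (hv.continuousOn_drift.mul hv.continuousOn_deriv)).neg.congr
    fun p hp => rate_eq (hv.contDiff p.1 hp.1) p.2

theorem hasDerivAt_integral_mul (hv : IsDensityFlow v) {g : ℝ → ℝ} (hg : Continuous g)
    (ht : 0 < t) :
    HasDerivAt (fun s => ∫ x in a..b, g x * v s x) (∫ x in a..b, g x * rate (v t) x) t := by
  have hvs : ∀ s ∈ Ioi (0 : ℝ), Continuous (v s) := fun s hs => hv.continuous (le_of_lt hs)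
  have h := hasDerivAt_of_sub_eq_integral_mul (Φ := fun s => ∫ x in a..b, g x * v s x)
    (a := a) (b := b) (A := fun _ x => g x) isOpen_Ioi ht hvs
    (fun s hs => hv.hasDerivAt_rate s hs)
    (hv.continuousOn_rate.mono (prod_mono Ioi_subset_Ici_self subset_rfl))
    (hg.comp continuous_snd).continuousOn fun s hs => by
      rw [← intervalIntegral.integral_sub ((hg.fun_mul (hvs s hs)).intervalIntegrable a b)
        ((hg.fun_mul (hvs t ht)).intervalIntegrable a b)]
      exact intervalIntegral.integral_congr fun x _ => by ring
  simpa only [mul_comm (rate _ _)] using h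

theorem continuousOn_mass (hv : IsDensityFlow v) :
    ContinuousOn (fun t => mass a b (v t)) (Ici 0) :=
  continuousOn_integral_of_continuousOn_Ici hv.continuousOn

theorem continuousOn_virial (hv : IsDensityFlow v) :
    ContinuousOn (fun t => virial a b (v t)) (Ici 0) :=
  continuousOn_integral_of_continuousOn_Ici (w := fun t x => x * v t x)
    (continuous_snd.continuousOn.mul hv.continuousOn)

theorem continuousOn_energy (hv : IsDensityFlow v) :
    ContinuousOn (fun t => energy a b (v t)) (Ici 0) :=
  continuousOn_integral_of_continuousOn_Ici
    (w := fun t x => (1 / 8) * deriv (v t) x ^ 2 - (1 / 4) * v t x ^ 2)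
    ((continuousOn_const.mul (hv.continuousOn_deriv.pow 2)).sub
      (continuousOn_const.mul (hv.continuousOn.pow 2)))

theorem mass_eq (hv : IsDensityFlow v) (ha : ∀ t, 0 ≤ t → a ∉ tsupport (v t))
    (hb : ∀ t, 0 ≤ t → b ∉ tsupport (v t)) (ht : 0 ≤ t) : mass a b (v t) = mass a b (v 0) := by
  refine eq_of_hasDerivAt_eq_zero hv.continuousOn_mass (fun s hs => ?_) ht
  have h := hv.hasDerivAt_integral_mul (a := a) (b := b) (g := fun _ => 1) continuous_const hs
  simp only [one_mul] at h
  rwa [integral_rate (hv.contDiff s hs.le) (ha s hs.le) (hb s hs.le)] at h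

theorem hasDerivAt_energy (hv : IsDensityFlow v) (ha : ∀ t, 0 ≤ t → a ∉ tsupport (v t))
    (hb : ∀ t, 0 ≤ t → b ∉ tsupport (v t)) (ht : 0 < t) :
    HasDerivAt (fun s => energy a b (v s)) 0 t := by
  have hvt := hv.contDiff t ht.le
  have hIoi : Ioi (0 : ℝ) ×ˢ (univ : Set ℝ) ⊆ Ici 0 ×ˢ univ :=
    prod_mono Ioi_subset_Ici_self subset_rfl
  have hA : ContinuousOn (fun p : ℝ × ℝ => -(1 / 4) * (drift (v p.1) p.2 + drift (v t) p.2))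
      (Ici 0 ×ˢ univ) :=
    continuousOn_const.mul (hv.continuousOn_drift.add
      ((continuous_drift (hvt.of_le (by norm_num))).comp continuous_snd).continuousOn)
  have h := hasDerivAt_of_sub_eq_integral_mul (Φ := fun s => energy a b (v s))
    (A := fun s x => -(1 / 4) * (drift (v s) x + drift (v t) x)) isOpen_Ioi ht
    (fun s hs => hv.continuous (le_of_lt hs)) (fun s hs => hv.hasDerivAt_rate s hs)
    (hv.continuousOn_rate.mono hIoi)
    (hA.mono hIoi)
    fun s hs => energy_sub_energy ((hv.contDiff s (le_of_lt hs)).of_le (by norm_num))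
      (hvt.of_le (by norm_num)) (ha s (le_of_lt hs)) (hb s (le_of_lt hs)) (ha t ht.le)
      (hb t ht.le)
  have hzero : ∫ x in a..b, rate (v t) x * (-(1 / 4) * (drift (v t) x + drift (v t) x)) = 0 := by
    rw [intervalIntegral.integral_congr
        (g := fun x => -(1 / 2) * (rate (v t) x * drift (v t) x)) fun x _ => by ring,
      intervalIntegral.integral_const_mul, integral_rate_mul_drift hvt (ha t ht.le) (hb t ht.le),
      mul_zero]
  rwa [hzero] at h

theorem energy_eq (hv : IsDensityFlow v) (ha : ∀ t, 0 ≤ t → a ∉ tsupport (v t))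
    (hb : ∀ t, 0 ≤ t → b ∉ tsupport (v t)) (ht : 0 ≤ t) :
    energy a b (v t) = energy a b (v 0) :=
  eq_of_hasDerivAt_eq_zero hv.continuousOn_energy (fun _ hs => hv.hasDerivAt_energy ha hb hs) ht

theorem hasDerivAt_virial (hv : IsDensityFlow v) (ha : ∀ t, 0 ≤ t → a ∉ tsupport (v t))
    (hb : ∀ t, 0 ≤ t → b ∉ tsupport (v t)) (ht : 0 < t) :
    HasDerivAt (fun s => virial a b (v s))
      (-(10 * energy a b (v t) + ∫ x in a..b, v t x ^ 2)) t := by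
  rw [← integral_mul_rate (hv.contDiff t ht.le) (ha t ht.le) (hb t ht.le)]
  exact hv.hasDerivAt_integral_mul continuous_id ht

theorem false_of_confined (hv : IsDensityFlow v) (ha : ∀ t, 0 ≤ t → a ∉ tsupport (v t))
    (hb : ∀ t, 0 ≤ t → b ∉ tsupport (v t)) (hab : a < b) (hm : 0 < mass a b (v 0))
    (hE : 0 ≤ energy a b (v 0)) : False := by
  obtain ⟨c, hc, hrate⟩ : ∃ c > 0, ∀ s, 0 < s →
      -(10 * energy a b (v s) + ∫ x in a..b, v s x ^ 2) ≤ -c := by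
    refine ⟨mass a b (v 0) ^ 2 / (b - a), by positivity, fun s hs => ?_⟩
    have hQ : mass a b (v 0) ^ 2 / (b - a) ≤ ∫ x in a..b, v s x ^ 2 := by
      rw [div_le_iff₀' (sub_pos.2 hab), ← hv.mass_eq ha hb hs.le]
      exact sq_integral_le_mul_integral_sq (hv.continuous hs.le) hab.le
    rw [hv.energy_eq ha hb hs.le]
    linarith
  have hdecay : ∀ t, 0 ≤ t → virial a b (v t) ≤ virial a b (v 0) + -c * (t - 0) :=
    fun t ht => le_add_mul_of_hasDerivAt_le hv.continuousOn_virial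
      (fun s hs => hv.hasDerivAt_virial ha hb hs) hrate ht
  have hlow : ∀ t, 0 ≤ t → a * mass a b (v 0) ≤ virial a b (v t) := fun t ht => by
    rw [← hv.mass_eq ha hb ht]
    exact mul_mass_le_virial (hv.continuous ht) (hv.nonneg t) hab.le
  set X := virial a b (v 0) - a * mass a b (v 0)
  have hT : 0 ≤ |X| / c + 1 := by positivity
  have hcT : c * (|X| / c + 1) = |X| + c := by field_simp
  linarith [hdecay _ hT, hlow _ hT, le_abs_self X]

end IsDensityFlow

end FocusingHydro

open FocusingHydro

theorem hydroDrift_one_eq (u : ℝ → ℝ → ℝ) (t : ℝ) :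
    hydroDrift 1 u t = drift fun x => u t x ^ 2 := by
  funext x
  simp only [hydroDrift, drift, one_mul]

namespace IsHydroSolution

variable {μ : ℝ} {u : ℝ → ℝ → ℝ} {t : ℝ}

theorem differentiable (hu : IsHydroSolution μ u) (ht : 0 ≤ t) : Differentiable ℝ (u t) := by
  intro x
  have hd : DifferentiableWithinAt ℝ (uncurry u) (Ici 0 ×ˢ univ) (t, x) :=
    hu.reg_C1.differentiableOn one_ne_zero _ ⟨ht, mem_univ x⟩
  exact differentiableWithinAt_univ.1 <| hd.comp x
    ((differentiableAt_const t).prodMk differentiableAt_id).differentiableWithinAt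
    fun z _ => ⟨ht, mem_univ z⟩

theorem differentiableAt_time (hu : IsHydroSolution μ u) (ht : 0 < t) (x : ℝ) :
    DifferentiableAt ℝ (fun s => u s x) t :=
  ((hu.reg_C1.contDiffAt (prod_mem_nhds (Ici_mem_nhds ht) univ_mem)).differentiableAt
    one_ne_zero).comp (f := fun s => (s, x)) t
      (differentiableAt_id.prodMk (differentiableAt_const x))

theorem isDensityFlow (hu : IsHydroSolution 1 u) : IsDensityFlow fun t x => u t x ^ 2 where
  nonneg t x := sq_nonneg (u t x)
  contDiff := hu.reg_sq_C3
  continuousOn_iteratedDeriv := hu.reg_sq_cont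
  hasDerivAt_rate t ht x := by
    have hux := (hu.differentiable ht.le x).hasDerivAt
    have hb := hasDerivAt_drift (hu.reg_sq_C3 t ht.le) x
    have heq := hu.eq t ht.le x
    rw [hydroDrift_one_eq, (hb.fun_mul hux).deriv] at heq
    refine ((hu.differentiableAt_time ht x).hasDerivAt.fun_pow 2).congr_deriv ?_
    rw [rate, hb.deriv]
    rw [(hux.fun_pow 2).deriv] at heq ⊢
    push_cast at heq ⊢
    linear_combination (2 * u t x) * heq

theorem energy_eq_hamiltonian (hu : IsHydroSolution μ u) {a b : ℝ} (ht : 0 ≤ t)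
    (hsupp : support (u t) ⊆ Ioc a b) :
    energy a b (fun x => u t x ^ 2)
      = (1 / 2) * (∫ x, (u t x * deriv (u t) x) ^ 2) - (1 / 4) * (∫ x, u t x ^ 4) := by
  have hderiv : ∀ x, deriv (fun x => u t x ^ 2) x = 2 * (u t x * deriv (u t) x) := fun x => by
    rw [((hu.differentiable ht x).hasDerivAt.fun_pow 2).deriv]
    push_cast
    ring
  have hd := (hu.reg_sq_C3 t ht).continuous_deriv (by norm_num)
  have hc := (hu.reg_sq_C3 t ht).continuous
  have h1 : ∫ x, (u t x * deriv (u t) x) ^ 2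
      = ∫ x in a..b, (1 / 4) * deriv (fun x => u t x ^ 2) x ^ 2 := by
    rw [← intervalIntegral.integral_eq_integral_of_support_subset
      ((support_subset_iff'.2 fun x hx => by simp [notMem_support.1 hx]).trans hsupp)]
    exact intervalIntegral.integral_congr fun x _ => by rw [hderiv]; ring
  have h2 : ∫ x, u t x ^ 4 = ∫ x in a..b, (u t x ^ 2) ^ 2 := by
    rw [← intervalIntegral.integral_eq_integral_of_support_subset
      ((support_subset_iff'.2 fun x hx => by simp [notMem_support.1 hx]).trans hsupp)]
    exact intervalIntegral.integral_congr fun x _ => by ring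
  rw [h1, h2, energy, intervalIntegral.integral_sub, intervalIntegral.integral_const_mul,
    intervalIntegral.integral_const_mul, intervalIntegral.integral_const_mul]
  · ring
  all_goals exact Continuous.intervalIntegrable (by fun_prop) a b

end IsHydroSolution

/-- Focusing non-existence of confined global solutions: if `u₀ ≠ 0` and `H(u₀) ≥ 0`,
there is no global hydrodynamic solution of the focusing equation with `u(0) = u₀`
whose support stays in a fixed interval `[-M, M]` for all times. -/
theorem focusing_no_confined_global_solution (u₀ : ℝ → ℝ) (hu₀ : u₀ ≠ 0)
    (hH : 0 ≤ (1 / 2) * (∫ x : ℝ, (u₀ x * deriv u₀ x) ^ 2)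
            - (1 / 4) * (∫ x : ℝ, (u₀ x) ^ 4)) :
    ¬ ∃ (u : ℝ → ℝ → ℝ) (M : ℝ), 0 < M ∧ u 0 = u₀ ∧ IsHydroSolution 1 u ∧
        ∀ t, 0 ≤ t → Function.support (u t) ⊆ Icc (-M) M := by
  rintro ⟨u, M, hM, rfl, hu, hsupp⟩
  have hv := hu.isDensityFlow
  have hIcc : Icc (-M) M ⊆ Ioo (-(M + 1)) (M + 1) := Icc_subset_Ioo (by linarith) (by linarith)
  have htsupp : ∀ t, 0 ≤ t → tsupport (fun x => u t x ^ 2) ⊆ Ioo (-(M + 1)) (M + 1) :=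
    fun t ht => (closure_minimal (by simpa only [support_pow _ two_ne_zero] using hsupp t ht)
      isClosed_Icc).trans hIcc
  refine hv.false_of_confined (fun t ht h => (htsupp t ht h).1.false)
    (fun t ht h => (htsupp t ht h).2.false) (by linarith) ?_ ?_
  · refine mass_pos (hv.continuous le_rfl) (hv.nonneg 0) (fun h => hu₀ ?_) (htsupp 0 le_rfl)
    exact funext fun x => pow_eq_zero_iff two_ne_zero |>.1 (congrFun h x)
  · rwa [hu.energy_eq_hamiltonian le_rfl ((hsupp 0 le_rfl).trans (hIcc.trans Ioo_subset_Ioc_self))]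
end

section
/- Solution of the bicharacteristic system for degenerate dispersion: for ρ(x) = x^k with k ≠ 3, the Hamiltonian system ẋ = −3ρ(x)ξ², ξ̇ = ρ'(x)ξ³ with initial data (x₀, ξ₀), x₀ > 0, is solved by x(t) = x₀(1 + (k−3)x₀^{k−1}ξ₀² t)^{3/(3−k)} and ξ(t) = ξ₀(1 + (k−3)x₀^{k−1}ξ₀² t)^{k/(k−3)} (for t such that the base is positive). -/
open Real

/-! Both components are constant multiples of real powers of the affine function
`u(t) = 1 + c t`, `c = (k - 3) x₀^{k-1} ξ₀²`, with exponents `p = 3/(3-k)` and `q = k/(k-3)`.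
Differentiating `u^p` and `u^q` and substituting into the right-hand sides, each equation reduces
to an identity between exponents of `u`: `p k + 2 q = p - 1` and `p (k - 1) + 3 q = q - 1`. -/

theorem hasDerivAt_mul_one_add_mul_rpow (a c p : ℝ) {t : ℝ} (ht : 0 < 1 + c * t) :
    HasDerivAt (fun s => a * (1 + c * s) ^ p) (a * (c * p * (1 + c * t) ^ (p - 1))) t := by
  simpa using ((((hasDerivAt_id t).const_mul c).const_add 1).rpow_const (Or.inl ht.ne')).const_mul a

theorem mul_rpow_rpow {a u : ℝ} (ha : 0 ≤ a) (hu : 0 ≤ u) (p r : ℝ) :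
    (a * u ^ p) ^ r = a ^ r * u ^ (p * r) := by
  rw [mul_rpow ha (rpow_nonneg hu p), rpow_mul hu]

theorem mul_rpow_pow {u : ℝ} (b : ℝ) (hu : 0 ≤ u) (q : ℝ) (n : ℕ) :
    (b * u ^ q) ^ n = b ^ n * u ^ (q * n) := by
  rw [mul_pow, rpow_mul_natCast hu]

section Bicharacteristic

variable {k x₀ ξ₀ c t : ℝ}

theorem bicharacteristic_exponents_position (hk : k ≠ 3) :
    3 / (3 - k) * k + k / (k - 3) * 2 = 3 / (3 - k) - 1 := by
  have h3k : 3 - k ≠ 0 := sub_ne_zero.mpr hk.symm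
  have hk3 : k - 3 ≠ 0 := sub_ne_zero.mpr hk
  field_simp
  ring

theorem bicharacteristic_exponents_momentum (hk : k ≠ 3) :
    3 / (3 - k) * (k - 1) + k / (k - 3) * 3 = k / (k - 3) - 1 := by
  have h3k : 3 - k ≠ 0 := sub_ne_zero.mpr hk.symm
  have hk3 : k - 3 ≠ 0 := sub_ne_zero.mpr hk
  field_simp
  ring

theorem hasDerivAt_bicharacteristic_position (hk : k ≠ 3) (hx₀ : 0 < x₀)
    (hc : c = (k - 3) * x₀ ^ (k - 1) * ξ₀ ^ 2) (ht : 0 < 1 + c * t) :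
    HasDerivAt (fun s => x₀ * (1 + c * s) ^ (3 / (3 - k)))
      (-3 * (x₀ * (1 + c * t) ^ (3 / (3 - k))) ^ k * (ξ₀ * (1 + c * t) ^ (k / (k - 3))) ^ 2) t := by
  convert hasDerivAt_mul_one_add_mul_rpow x₀ c _ ht using 1
  rw [mul_rpow_rpow hx₀.le ht.le, mul_rpow_pow _ ht.le, Nat.cast_ofNat,
    ← bicharacteristic_exponents_position hk, rpow_add ht, hc, rpow_sub_one hx₀.ne']
  have h3k : 3 - k ≠ 0 := sub_ne_zero.mpr hk.symm
  field_simp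
  ring

theorem hasDerivAt_bicharacteristic_momentum (hk : k ≠ 3) (hx₀ : 0 < x₀)
    (hc : c = (k - 3) * x₀ ^ (k - 1) * ξ₀ ^ 2) (ht : 0 < 1 + c * t) :
    HasDerivAt (fun s => ξ₀ * (1 + c * s) ^ (k / (k - 3)))
      (k * (x₀ * (1 + c * t) ^ (3 / (3 - k))) ^ (k - 1) *
        (ξ₀ * (1 + c * t) ^ (k / (k - 3))) ^ 3) t := by
  convert hasDerivAt_mul_one_add_mul_rpow ξ₀ c _ ht using 1
  rw [mul_rpow_rpow hx₀.le ht.le, mul_rpow_pow _ ht.le, Nat.cast_ofNat,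
    ← bicharacteristic_exponents_momentum hk, rpow_add ht, hc]
  have hk3 : k - 3 ≠ 0 := sub_ne_zero.mpr hk
  field_simp

end Bicharacteristic

/-- Explicit solution of the bicharacteristic system `ẋ = −3x^k ξ²`, `ξ̇ = k x^{k−1} ξ³`
for `ρ(x) = x^k`, `k ≠ 3`, with initial data `(x₀, ξ₀)`, `x₀ > 0`. -/
theorem bicharacteristics_explicit_solution (k x₀ ξ₀ : ℝ) (hk : k ≠ 3) (hx₀ : 0 < x₀)
    (x ξ : ℝ → ℝ)
    (hx : ∀ t, x t = x₀ * (1 + (k - 3) * x₀ ^ (k - 1) * ξ₀ ^ 2 * t) ^ (3 / (3 - k)))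
    (hξ : ∀ t, ξ t = ξ₀ * (1 + (k - 3) * x₀ ^ (k - 1) * ξ₀ ^ 2 * t) ^ (k / (k - 3))) :
    x 0 = x₀ ∧ ξ 0 = ξ₀ ∧
      ∀ t : ℝ, 0 < 1 + (k - 3) * x₀ ^ (k - 1) * ξ₀ ^ 2 * t →
        HasDerivAt x (-3 * (x t) ^ k * (ξ t) ^ 2) t ∧
        HasDerivAt ξ (k * (x t) ^ (k - 1) * (ξ t) ^ 3) t := by
  obtain rfl : x = _ := funext hx
  obtain rfl : ξ = _ := funext hξ
  exact ⟨by simp, by simp, fun t ht =>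
    ⟨hasDerivAt_bicharacteristic_position hk hx₀ rfl ht,
      hasDerivAt_bicharacteristic_momentum hk hx₀ rfl ht⟩⟩
end
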